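/- Let G be the CPDAG of the Markov equivalence class of a DAG. Then G contains no induced subgraph of the form A → B − C: if G contains a directed edge A → B and an undirected edge B − C with A ≠ C, then A and C are adjacent in G. -/
import Mathlib


/-- A directed acyclic graph on node set `V`: a directed edge relation with no
directed cycles (no edge `a → b` together with a directed path from `b` back to `a`). -/
structure Dag (V : Type*) where
  edge : V → V → Prop
  acyclic : ∀ a b : V, edge a b → ¬ Relation.ReflTransGen edge b a

variable {V : Type*}

namespace Dag

/-- `a` is an ancestor of `b` (equivalently, `b` is a descendant of `a`):
there is a directed path from `a` to `b`; every node is its own ancestor. -/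
def Anc (D : Dag V) (a b : V) : Prop := Relation.ReflTransGen D.edge a b

/-- `a` and `b` are adjacent (joined by an edge in either direction). -/
def Adj (D : Dag V) (a b : V) : Prop := D.edge a b ∨ D.edge b a

/-- The parents of `x` in the DAG `D`. -/
def Pa (D : Dag V) (x : V) : Set V := {a | D.edge a x}

/-- The Markov blanket of `x`: parents, children, and parents of children of `x`
(excluding `x` itself). -/
def MB (D : Dag V) (x : V) : Set V :=
  {v | v ≠ x ∧ (D.edge v x ∨ D.edge x v ∨ ∃ c : V, D.edge x c ∧ D.edge v c)}

end Dag

/-- A path between `x` and `y` with respect to an adjacency relation `A`: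
a sequence of distinct nodes, starting at `x` and ending at `y`, in which
consecutive nodes are adjacent. `n` is the number of edges of the path. -/
structure GPath (A : V → V → Prop) (x y : V) where
  n : ℕ
  f : Fin (n + 1) → V
  inj : Function.Injective f
  first : f ⟨0, by omega⟩ = x
  last : f ⟨n, by omega⟩ = y
  adj : ∀ i : Fin n, A (f i.castSucc) (f i.succ)

namespace GPath

/-- The non-endpoint node at position `i` of the path `p` is a collider with respect
to the directed edge relation `E`: both incident edges of the path point into it. -/
def ColliderAt {A : V → V → Prop} {x y : V} (p : GPath A x y)
    (E : V → V → Prop) (i : ℕ) : Prop :=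
  ∃ (_ : 0 < i) (_ : i < p.n),
    E (p.f ⟨i - 1, by omega⟩) (p.f ⟨i, by omega⟩) ∧
    E (p.f ⟨i + 1, by omega⟩) (p.f ⟨i, by omega⟩)

/-- The path `p` is blocked by the node set `S` in the DAG `D`: it contains a
non-collider that lies in `S`, or a collider such that neither the collider nor any
of its descendants lies in `S`. -/
def Blocked {A : V → V → Prop} {x y : V} (p : GPath A x y)
    (D : Dag V) (S : Set V) : Prop :=
  ∃ (i : ℕ) (_ : 0 < i) (_ : i < p.n),
    (¬ p.ColliderAt D.edge i ∧ p.f ⟨i, by omega⟩ ∈ S) ∨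
    (p.ColliderAt D.edge i ∧ ∀ d : V, D.Anc (p.f ⟨i, by omega⟩) d → d ∉ S)

end GPath

namespace Dag

/-- `x` and `y` are d-separated by `S` in the DAG `D`: every path between `x` and `y`
is blocked by `S`. -/
def dSep (D : Dag V) (x y : V) (S : Set V) : Prop :=
  ∀ p : GPath D.Adj x y, p.Blocked D S

/-- Two DAGs on the same node set are Markov equivalent if they have exactly the same
d-separation relations. -/
def MEquiv (D D' : Dag V) : Prop :=
  ∀ (x y : V) (S : Set V), D.dSep x y S ↔ D'.dSep x y S

/-- The edge between `a` and `b` is directed `a → b` in the CPDAG of the Markov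
equivalence class of `D`: the edge `a → b` holds in every DAG Markov equivalent to `D`. -/
def CpDir (D : Dag V) (a b : V) : Prop :=
  ∀ D' : Dag V, D.MEquiv D' → D'.edge a b

/-- The edge between `a` and `b` is undirected (`a − b`) in the CPDAG: `a` and `b` are
adjacent (the CPDAG has the same adjacencies as the DAGs of the MEC) but the edge is not
directed either way in the CPDAG. -/
def CpUndir (D : Dag V) (a b : V) : Prop :=
  D.Adj a b ∧ ¬ D.CpDir a b ∧ ¬ D.CpDir b a

/-- `Pa_G(a)`: the nodes with a directed edge into `a` in the CPDAG. -/
def CpPa (D : Dag V) (a : V) : Set V := {p | D.CpDir p a}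

/-- `Ch_G(a)`: the nodes `b` with the edge directed `a → b` in the CPDAG. -/
def CpCh (D : Dag V) (a : V) : Set V := {c | D.CpDir a c}

/-- `Sib_G(a)`: the nodes joined to `a` by an undirected edge in the CPDAG. -/
def CpSib (D : Dag V) (a : V) : Set V := {s | D.CpUndir a s}

end Dag

namespace GPath

/-- `p` is a possibly directed path in the CPDAG: no edge on it is directed
backwards (as `V_i ← V_{i+1}`) in the CPDAG. -/
def CpPossiblyDirected {D : Dag V} {x y : V} (p : GPath D.Adj x y) : Prop :=
  ∀ i : Fin p.n, ¬ D.CpDir (p.f i.succ) (p.f i.castSucc)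

/-- `p` is a (fully) directed path in the CPDAG: every edge on it is directed
forwards in the CPDAG. -/
def CpDirected {D : Dag V} {x y : V} (p : GPath D.Adj x y) : Prop :=
  ∀ i : Fin p.n, D.CpDir (p.f i.castSucc) (p.f i.succ)

/-- `p` is a directed path from `x` to `y` in the DAG `D` itself. -/
def DirectedIn {D : Dag V} {x y : V} (p : GPath D.Adj x y) : Prop :=
  ∀ i : Fin p.n, D.edge (p.f i.castSucc) (p.f i.succ)

/-- `p` is unshielded: for every three consecutive nodes on it, the first and the
third are non-adjacent. -/
def Unshielded {D : Dag V} {x y : V} (p : GPath D.Adj x y) : Prop :=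
  ∀ (i : ℕ) (_ : i + 2 ≤ p.n), ¬ D.Adj (p.f ⟨i, by omega⟩) (p.f ⟨i + 2, by omega⟩)

end GPath

namespace Dag

/-- `x` is a possible ancestor of `y` in the CPDAG: there is a possibly directed path
from `x` to `y`. -/
def PossAn (D : Dag V) (x y : V) : Prop :=
  ∃ p : GPath D.Adj x y, p.CpPossiblyDirected

/-- `x` is an explicit ancestor of `y` in the CPDAG: there is a fully directed path
from `x` to `y` in the CPDAG. -/
def ExplAn (D : Dag V) (x y : V) : Prop :=
  ∃ p : GPath D.Adj x y, p.CpDirected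

/-- The CPDAG is amenable relative to `(x, y)`: every possibly directed path from
`x` to `y` starts with a directed edge out of `x`. -/
def Amenable (D : Dag V) (x y : V) : Prop :=
  ∀ p : GPath D.Adj x y, p.CpPossiblyDirected →
    ∀ _ : 0 < p.n, D.CpDir (p.f ⟨0, by omega⟩) (p.f ⟨1, by omega⟩)

/-- `S` is a valid adjustment set for `(x, y)` in the DAG `D`:
(i) no element of `S` is a descendant of any node `w ≠ x` lying on a directed path
from `x` to `y`, and (ii) every path between `x` and `y` that is not a directed path
from `x` to `y` is blocked by `S`. -/
def ValidAdjustment (D : Dag V) (x y : V) (S : Set V) : Prop :=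
  (∀ s ∈ S, ∀ w : V, w ≠ x → D.Anc x w → D.Anc w y → ¬ D.Anc w s) ∧
  (∀ p : GPath D.Adj x y, ¬ p.DirectedIn → p.Blocked D S)

/-- `Cn_D(x, y)`: the nodes `w ≠ x` lying on some directed path from `x` to `y` in `D`. -/
def Cn (D : Dag V) (x y : V) : Set V := {w | w ≠ x ∧ D.Anc x w ∧ D.Anc w y}

end Dag

section Aux

variable {V : Type*}

namespace Dag

lemma ne_of_edge (D : Dag V) {a b : V} (h : D.edge a b) : a ≠ b := by
  rintro rfl; exact D.acyclic a a h Relation.ReflTransGen.refl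

lemma not_edge_of_edge (D : Dag V) {a b : V} (h : D.edge a b) : ¬ D.edge b a :=
  fun h' => D.acyclic b a h' (Relation.ReflTransGen.single h)

lemma ne_of_adj (D : Dag V) {a b : V} (h : D.Adj a b) : a ≠ b := by
  rcases h with h | h
  · exact D.ne_of_edge h
  · exact (D.ne_of_edge h).symm

lemma not_anc_of_anc (D : Dag V) {a b : V} (hne : a ≠ b) (h : D.Anc a b) :
    ¬ D.Anc b a := by
  intro h'
  rcases (Relation.ReflTransGen.cases_head h) with rfl | ⟨c, hac, hcb⟩
  · exact hne rfl
  · exact D.acyclic a c hac (hcb.trans h')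

end Dag

/-- transport helpers avoiding motive issues -/
lemma rtg_congr {α : Type*} {r : α → α → Prop} {a b c : α}
    (h : Relation.ReflTransGen r a b) (e : a = c) : Relation.ReflTransGen r c b :=
  e ▸ h

lemma edge_congr {V : Type*} {D : Dag V} {a b a' b' : V} (h : D.edge a b)
    (e1 : a = a') (e2 : b = b') : D.edge a' b' := e1 ▸ e2 ▸ h

lemma adj_congr {V : Type*} {D : Dag V} {a b a' b' : V} (h : D.Adj a b)
    (e1 : a = a') (e2 : b = b') : D.Adj a' b' := e1 ▸ e2 ▸ h

/-- chain of forward edges along a path gives ancestry. -/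
lemma chain_anc {V : Type*} (D : Dag V) {x y : V} (p : GPath D.Adj x y) :
    ∀ (k : ℕ) (hk : k ≤ p.n)
      (hfwd : ∀ i (hik : i < k), D.edge (p.f ⟨i, by omega⟩) (p.f ⟨i + 1, by omega⟩)),
      Relation.ReflTransGen D.edge x (p.f ⟨k, by omega⟩) := by
  intro k
  induction k with
  | zero =>
    intro hk _
    exact rtg_congr Relation.ReflTransGen.refl p.first
  | succ k ih =>
    intro hk hfwd
    exact (ih (by omega) (fun i hi => hfwd i (by omega))).tail (hfwd k (by omega))

/-- Local Markov: a path from `x` to a non-adjacent non-descendant `y` is blocked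
by the parents of `x`. -/
lemma blocked_by_pa {V : Type*} (D : Dag V) {x y : V}
    (hadj : ¬ D.Adj x y) (hanc : ¬ D.Anc x y) (p : GPath D.Adj x y) :
    p.Blocked D (D.Pa x) := by
  classical
  have hxy : x ≠ y := by rintro rfl; exact hanc Relation.ReflTransGen.refl
  have hn0 : p.n ≠ 0 := by
    intro h
    apply hxy
    calc x = p.f ⟨0, by omega⟩ := p.first.symm
      _ = p.f ⟨p.n, by omega⟩ := congrArg p.f (Fin.ext (show (0 : ℕ) = p.n by omega))
      _ = y := p.last
  have hn1 : p.n ≠ 1 := by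
    intro h
    apply hadj
    have hA := p.adj ⟨0, by omega⟩
    simp only [Fin.castSucc_mk, Fin.succ_mk] at hA
    have e2 : p.f ⟨0 + 1, by omega⟩ = y :=
      (congrArg p.f (Fin.ext (show 0 + 1 = p.n by omega))).trans p.last
    exact adj_congr hA p.first e2
  have hn2 : 2 ≤ p.n := by omega
  have hexists : ∃ i, ∃ _ : i < p.n,
      ¬ D.edge (p.f ⟨i, by omega⟩) (p.f ⟨i + 1, by omega⟩) := by
    by_contra hall
    push_neg at hall
    apply hanc
    have h := chain_anc D p p.n le_rfl (fun i hi => hall i hi)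
    rwa [p.last] at h
  obtain ⟨hjlt, hjne⟩ := Nat.find_spec hexists
  set j := Nat.find hexists with hjdef
  have hmin : ∀ i, i < j → ∀ hi : i < p.n,
      D.edge (p.f ⟨i, by omega⟩) (p.f ⟨i + 1, by omega⟩) := by
    intro i hij hi
    have h := Nat.find_min hexists hij
    push_neg at h
    exact h hi
  have hadj_j : D.Adj (p.f ⟨j, by omega⟩) (p.f ⟨j + 1, by omega⟩) := by
    have hA := p.adj ⟨j, hjlt⟩
    simpa only [Fin.castSucc_mk, Fin.succ_mk] using hA
  have hback : D.edge (p.f ⟨j + 1, by omega⟩) (p.f ⟨j, by omega⟩) :=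
    hadj_j.resolve_left hjne
  rcases Nat.eq_zero_or_pos j with hj0 | hjpos
  · -- first edge points into x : blocked at noncollider 1 ∈ Pa x
    have e1 : p.f ⟨j + 1, by omega⟩ = p.f ⟨1, by omega⟩ :=
      congrArg p.f (Fin.ext (show j + 1 = 1 by omega))
    have e0 : p.f ⟨j, by omega⟩ = p.f ⟨0, by omega⟩ :=
      congrArg p.f (Fin.ext (show j = 0 by omega))
    have hb1 : D.edge (p.f ⟨1, by omega⟩) (p.f ⟨0, by omega⟩) := e1 ▸ e0 ▸ hback
    refine ⟨1, one_pos, by omega, Or.inl ⟨?_, ?_⟩⟩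
    · intro hcol
      unfold GPath.ColliderAt at hcol
      obtain ⟨hu1, hu2, hcol1, hcol2⟩ := hcol
      exact D.not_edge_of_edge hb1 hcol1
    · exact edge_congr hb1 rfl p.first
  · -- blocked at collider j, no descendant of it is a parent of x
    have hfwd : D.edge (p.f ⟨j - 1, by omega⟩) (p.f ⟨j, by omega⟩) := by
      have h := hmin (j - 1) (by omega) (by omega)
      have e : p.f ⟨j - 1 + 1, by omega⟩ = p.f ⟨j, by omega⟩ :=
        congrArg p.f (Fin.ext (show j - 1 + 1 = j by omega))
      exact e ▸ h
    refine ⟨j, hjpos, hjlt, Or.inr ⟨⟨hjpos, hjlt, hfwd, hback⟩, ?_⟩⟩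
    intro d hd hdS
    have hx : Relation.ReflTransGen D.edge x (p.f ⟨j, by omega⟩) :=
      chain_anc D p j (by omega) (fun i hi => hmin i hi (by omega))
    exact D.acyclic d x hdS (hx.trans hd)

/-- A single-edge path. -/
def onePath {V : Type*} (D : Dag V) {a b : V} (h : D.Adj a b) :
    GPath D.Adj a b where
  n := 1
  f := ![a, b]
  inj := by
    have hne := D.ne_of_adj h
    intro i j hij
    fin_cases i <;> fin_cases j <;> simp_all
  first := rfl
  last := rfl
  adj := by intro i; fin_cases i; simpa using h

lemma adj_no_sep {V : Type*} (D : Dag V) {a b : V} (h : D.Adj a b) (S : Set V) :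
    ¬ D.dSep a b S := by
  intro hsep
  have hb := hsep (onePath D h)
  unfold GPath.Blocked at hb
  obtain ⟨i, hi0, hin, -⟩ := hb
  have h1 : i < 1 := hin
  omega

lemma exists_sep {V : Type*} (D : Dag V) {x y : V} (hne : x ≠ y)
    (hadj : ¬ D.Adj x y) : ∃ S, D.dSep x y S ∨ D.dSep y x S := by
  by_cases h : D.Anc x y
  · exact ⟨D.Pa y, Or.inr fun p =>
      blocked_by_pa D (fun h' => hadj h'.symm) (D.not_anc_of_anc hne h) p⟩
  · exact ⟨D.Pa x, Or.inl fun p => blocked_by_pa D hadj h p⟩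

lemma mequiv_symm {V : Type*} {D D' : Dag V} (h : D.MEquiv D') : D'.MEquiv D :=
  fun x y S => (h x y S).symm

lemma adj_invariant {V : Type*} {D D' : Dag V} (hE : D.MEquiv D') {a b : V}
    (h : D.Adj a b) : D'.Adj a b := by
  by_contra h'
  obtain ⟨S, hS | hS⟩ := exists_sep D' (D.ne_of_adj h) h'
  · exact adj_no_sep D h S ((hE a b S).mpr hS)
  · exact adj_no_sep D (Or.symm h) S ((hE b a S).mpr hS)

/-- A two-edge path through distinct nodes. -/
def twoPath {V : Type*} (D : Dag V) {a b c : V} (hab : D.Adj a b)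
    (hbc : D.Adj b c) (h1 : a ≠ b) (h2 : a ≠ c) (h3 : b ≠ c) :
    GPath D.Adj a c where
  n := 2
  f := ![a, b, c]
  inj := by intro i j hij; fin_cases i <;> fin_cases j <;> simp_all
  first := rfl
  last := rfl
  adj := by
    intro i
    fin_cases i
    · simpa using hab
    · simpa using hbc

/-- If `a → b ← c` is a collider with `a ≠ c` and `S` d-separates `a` and `c`,
then `b ∉ S`. -/
lemma mid_not_mem {V : Type*} (D : Dag V) {a b c : V} (hab : D.edge a b)
    (hcb : D.edge c b) (hac : a ≠ c) (S : Set V) (h : D.dSep a c S) : b ∉ S := by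
  have h1 : a ≠ b := D.ne_of_edge hab
  have h3 : b ≠ c := (D.ne_of_edge hcb).symm
  have hblk := h (twoPath D (Or.inl hab) (Or.inr hcb) h1 hac h3)
  unfold GPath.Blocked at hblk
  obtain ⟨i, hi0, hin, hcase⟩ := hblk
  have hi2 : i < 2 := hin
  have hi1 : i = 1 := by omega
  subst hi1
  rcases hcase with ⟨hnc, -⟩ | ⟨-, hall⟩
  · exact absurd ⟨one_pos, Nat.one_lt_two, hab, hcb⟩ hnc
  · intro hb
    exact hall b Relation.ReflTransGen.refl hb

/-- If `a - b - c` is a path with `b` a non-collider, `a ≠ c`, and `S`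
d-separates `a` and `c`, then `b ∈ S`. -/
lemma mid_mem {V : Type*} (D : Dag V) {a b c : V} (hab : D.Adj a b)
    (hbc : D.Adj b c) (hac : a ≠ c)
    (hnc : ¬ (D.edge a b ∧ D.edge c b)) (S : Set V) (h : D.dSep a c S) :
    b ∈ S := by
  have h1 : a ≠ b := D.ne_of_adj hab
  have h3 : b ≠ c := D.ne_of_adj hbc
  have hblk := h (twoPath D hab hbc h1 hac h3)
  unfold GPath.Blocked at hblk
  obtain ⟨i, hi0, hin, hcase⟩ := hblk
  have hi2 : i < 2 := hin
  have hi1 : i = 1 := by omega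
  subst hi1
  rcases hcase with ⟨-, hb⟩ | ⟨hcol, -⟩
  · exact hb
  · unfold GPath.ColliderAt at hcol
    obtain ⟨hu1, hu2, he1, he2⟩ := hcol
    exact absurd ⟨he1, he2⟩ hnc

end Aux

/-- The CPDAG `G` of the MEC of a DAG contains no induced subgraph of the
form `A → B − C`: if `G` has a directed edge `A → B` and an undirected edge `B − C` with
`A ≠ C`, then `A` and `C` are adjacent in `G`. -/
theorem no_induced_dir_undir_structure
    {V : Type*} [Fintype V] (D : Dag V) (A B C : V) (hAC : A ≠ C)
    (hdir : D.CpDir A B) (hundir : D.CpUndir B C) :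
    D.Adj A C := by
  by_contra hAC'
  obtain ⟨hBCadj, hnBC, hnCB⟩ := hundir
  rw [Dag.CpDir] at hnBC hnCB
  push_neg at hnBC hnCB
  obtain ⟨D₁, hE1, h1⟩ := hnBC
  obtain ⟨D₂, hE2, h2⟩ := hnCB
  have hAB1 : D₁.edge A B := hdir D₁ hE1
  have hAB2 : D₂.edge A B := hdir D₂ hE2
  have hCB1 : D₁.edge C B := (adj_invariant hE1 hBCadj).resolve_left h1
  have hBC2 : D₂.edge B C := (adj_invariant hE2 hBCadj).resolve_right h2
  obtain ⟨S, hS | hS⟩ := exists_sep D hAC hAC'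
  · have hout : B ∉ S := mid_not_mem D₁ hAB1 hCB1 hAC S ((hE1 A C S).mp hS)
    have hin : B ∈ S :=
      mid_mem D₂ (Or.inl hAB2) (Or.inl hBC2) hAC
        (fun hh => D₂.not_edge_of_edge hBC2 hh.2) S ((hE2 A C S).mp hS)
    exact hout hin
  · have hout : B ∉ S := mid_not_mem D₁ hCB1 hAB1 hAC.symm S ((hE1 C A S).mp hS)
    have hin : B ∈ S :=
      mid_mem D₂ (Or.inr hBC2) (Or.inr hAB2) hAC.symm
        (fun hh => D₂.not_edge_of_edge hBC2 hh.1) S ((hE2 C A S).mp hS)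
    exact hout hin
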